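/- arXiv:1902.00216 — 2 statements merged into one kernel-verified Lean document; each statement's English description precedes it below -/
import Mathlib

section
/- Let w be a p-string with |w| ≥ 2 and let 2 ≤ j ≤ |w|. If ⟨w⟩[j] = j − 1 (as a natural number), then ⟨w[2:]⟩[j−1] = 0; otherwise ⟨w[2:]⟩[j−1] = ⟨w⟩[j]. In particular, the prev-encoding of the suffix w[2:] differs from the shifted prev-encoding of w in at most one position. -/
/-! Deleting the first symbol of `w` shifts every position down by one and forgets position `0`.
A parameter's distance to its previous occurrence is therefore unchanged, unless that previous
occurrence was position `0` (exactly when `⟨w⟩[j] = j - 1`); then the parameter becomes a first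
occurrence in `w[2:]` and is encoded by `0`. Constants are unaffected. -/

open List

variable {σ π : Type*}

/-- The prev-encoding symbol of `w` at (0-indexed) position `i`:
constants are kept; a parameter is encoded by the distance to its
previous occurrence, or `0` if it has no previous occurrence. -/
def prevAt [DecidableEq σ] [DecidableEq π] (w : List (σ ⊕ π)) (i : ℕ) : σ ⊕ ℕ :=
  match w[i]? with
  | some (Sum.inl a) => Sum.inl a
  | some (Sum.inr x) =>
      let s := (Finset.range i).filter (fun j => w[j]? = some (Sum.inr x))
      if h : s.Nonempty then Sum.inr (i - s.max' h) else Sum.inr 0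
  | none => Sum.inr 0

/-- The prev-encoding `⟨w⟩` of a p-string `w`. -/
def prevEncode [DecidableEq σ] [DecidableEq π] (w : List (σ ⊕ π)) : List (σ ⊕ ℕ) :=
  (List.range w.length).map (prevAt w)

/-- The `k`-re-encoding `⟨u⟩ₖ` of a pv-string `u`: a numeric symbol `u[i]`
(1-indexed) is replaced by `0` whenever `u[i] ≥ i - k + 1`. -/
def reEncode (k : ℕ) (u : List (σ ⊕ ℕ)) : List (σ ⊕ ℕ) :=
  (List.range u.length).map (fun i =>
    match u[i]? with
    | some (Sum.inl a) => Sum.inl a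
    | some (Sum.inr m) => if i + 2 ≤ m + k then Sum.inr (0 : ℕ) else Sum.inr m
    | none => Sum.inr 0)

/-- The implicit suffix link `sl(u) = ⟨u[2:]⟩₁`. -/
def sl (u : List (σ ⊕ ℕ)) : List (σ ⊕ ℕ) := reEncode 1 u.tail

/-- The set of prev-encoded substrings of `T`. -/
def PrevSub [DecidableEq σ] [DecidableEq π] (T : List (σ ⊕ π)) : Set (List (σ ⊕ ℕ)) :=
  { u | ∃ w, w <:+: T ∧ u = prevEncode w }

theorem Finset.max'_erase_bot {α : Type*} [LinearOrder α] [OrderBot α] {s : Finset α}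
    (h : (s.erase ⊥).Nonempty) :
    (s.erase ⊥).max' h = s.max' (h.mono (s.erase_subset ⊥)) := by
  refine le_antisymm (max'_subset h (s.erase_subset ⊥)) (max'_le _ _ _ fun y hy => ?_)
  rcases eq_or_ne y ⊥ with rfl | hy_ne
  · exact bot_le
  · exact le_max' _ y (mem_erase.2 ⟨hy_ne, hy⟩)

section PrevEncoding

variable [DecidableEq σ] [DecidableEq π]

def prevOccurrences (w : List (σ ⊕ π)) (i : ℕ) (x : π) : Finset ℕ :=
  (Finset.range i).filter (fun j => w[j]? = some (Sum.inr x))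

theorem prevAt_of_getElem?_eq_inl {w : List (σ ⊕ π)} {i : ℕ} {a : σ}
    (h : w[i]? = some (Sum.inl a)) : prevAt w i = Sum.inl a := by
  simp [prevAt, h]

theorem prevAt_of_getElem?_eq_inr {w : List (σ ⊕ π)} {i : ℕ} {x : π}
    (h : w[i]? = some (Sum.inr x)) :
    prevAt w i = if hs : (prevOccurrences w i x).Nonempty
      then Sum.inr (i - (prevOccurrences w i x).max' hs) else Sum.inr 0 := by
  simp only [prevAt, h]
  rfl

theorem prevAt_of_length_le {w : List (σ ⊕ π)} {i : ℕ} (h : w.length ≤ i) :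
    prevAt w i = Sum.inr 0 := by
  simp [prevAt, List.getElem?_eq_none h]

theorem prevOccurrences_tail (w : List (σ ⊕ π)) (i : ℕ) (x : π) :
    (prevOccurrences w (i + 1) x).erase 0 = (prevOccurrences w.tail i x).image (· + 1) := by
  ext j
  cases j <;> simp [prevOccurrences, List.getElem?_tail]

theorem prevAt_tail (w : List (σ ⊕ π)) (i : ℕ) :
    prevAt w.tail i =
      if prevAt w (i + 1) = Sum.inr (i + 1) then Sum.inr 0 else prevAt w (i + 1) := by
  have htail : w.tail[i]? = w[i + 1]? := List.getElem?_tail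
  rcases hwi : w[i + 1]? with _ | a | x
  · rw [List.getElem?_eq_none_iff] at hwi
    rw [prevAt_of_length_le (by simpa using hwi), prevAt_of_length_le hwi]
    simp
  · rw [prevAt_of_getElem?_eq_inl hwi, prevAt_of_getElem?_eq_inl (htail.trans hwi)]
    simp
  · rw [prevAt_of_getElem?_eq_inr hwi, prevAt_of_getElem?_eq_inr (htail.trans hwi)]
    have hrel := prevOccurrences_tail w i x
    set s := prevOccurrences w (i + 1) x
    set s' := prevOccurrences w.tail i x
    by_cases hs' : s'.Nonempty
    · have hne : (s.erase ⊥).Nonempty := by rw [Nat.bot_eq_zero, hrel]; exact hs'.image _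
      have hmax : s.max' (hne.mono (s.erase_subset ⊥)) = s'.max' hs' + 1 := by
        rw [← Finset.max'_erase_bot hne]
        simp [hrel, Finset.max'_image (f := (· + 1)) (fun _ _ h => Nat.add_le_add_right h 1)]
      have hlt : s'.max' hs' < i := Finset.mem_range.1 (Finset.mem_filter.1 (s'.max'_mem hs')).1
      rw [dif_pos hs', dif_pos (hne.mono (s.erase_subset ⊥)), hmax, if_neg (by simp only [Sum.inr.injEq]; omega)]
      congr 1
      omega
    · have hs : s = ∅ ∨ s = {0} := by
        rw [← Finset.erase_eq_empty_iff, hrel, Finset.image_eq_empty,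
          ← Finset.not_nonempty_iff_eq_empty]
        exact hs'
      rw [dif_neg hs']
      rcases hs with hs | hs <;> simp [hs]

theorem getElem?_prevEncode (w : List (σ ⊕ π)) (i : ℕ) :
    (prevEncode w)[i]? = if i < w.length then some (prevAt w i) else none := by
  split_ifs with h <;> simp [prevEncode, h]

theorem getElem?_prevEncode_tail (w : List (σ ⊕ π)) (i : ℕ) :
    (prevEncode w.tail)[i]? = ((prevEncode w)[i + 1]?).map
      (fun c => if c = Sum.inr (i + 1) then Sum.inr 0 else c) := by
  simp only [getElem?_prevEncode, prevAt_tail, List.length_tail]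
  split_ifs <;> first | omega | simp_all

end PrevEncoding

theorem prevEncode_tail_dichotomy_general [DecidableEq σ] [DecidableEq π]
    (w : List (σ ⊕ π)) (j : ℕ) (hj1 : 2 ≤ j) :
    ((prevEncode w)[j - 1]? = some (Sum.inr (j - 1)) →
      (prevEncode w.tail)[j - 2]? = some (Sum.inr (0 : ℕ))) ∧
    ((prevEncode w)[j - 1]? ≠ some (Sum.inr (j - 1)) →
      (prevEncode w.tail)[j - 2]? = (prevEncode w)[j - 1]?) := by
  obtain ⟨i, rfl⟩ : ∃ i, j = i + 2 := ⟨j - 2, by omega⟩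
  simp only [Nat.add_sub_cancel, show i + 2 - 1 = i + 1 by omega, getElem?_prevEncode_tail]
  refine ⟨fun h => by simp [h], fun h => ?_⟩
  rcases hc : (prevEncode w)[i + 1]? with _ | c
  · rfl
  · simp_all

/-- For `2 ≤ j ≤ |w|` (1-indexed): if `⟨w⟩[j] = j − 1` then `⟨w[2:]⟩[j−1] = 0`;
otherwise `⟨w[2:]⟩[j−1] = ⟨w⟩[j]`. -/
theorem prevEncode_tail_dichotomy [DecidableEq σ] [DecidableEq π]
    (w : List (σ ⊕ π)) (hw : 2 ≤ w.length) (j : ℕ) (hj1 : 2 ≤ j) (hj2 : j ≤ w.length) :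
    ((prevEncode w)[j - 1]? = some (Sum.inr (j - 1)) →
      (prevEncode w.tail)[j - 2]? = some (Sum.inr (0 : ℕ))) ∧
    ((prevEncode w)[j - 1]? ≠ some (Sum.inr (j - 1)) →
      (prevEncode w.tail)[j - 2]? = (prevEncode w)[j - 1]?) :=
  prevEncode_tail_dichotomy_general w j hj1
end

section
/- Let T be a p-string of length n ≥ 1 ending with a sentinel symbol $ ∈ Σ that occurs nowhere else in T. Then the number of branching elements of PrevSub(T) is less than n, where u ∈ PrevSub(T) is branching if there exist two distinct symbols a ≠ b over Σ ∪ ℕ with both ua ∈ PrevSub(T) and ub ∈ PrevSub(T). -/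
open List

variable {σ π : Type*}

/-- `u` is a leaf of `PrevSub T`: it belongs to `PrevSub T` and is not a
proper prefix of any element of `PrevSub T`. -/
def IsLeaf [DecidableEq σ] [DecidableEq π] (T : List (σ ⊕ π)) (u : List (σ ⊕ ℕ)) : Prop :=
  u ∈ PrevSub T ∧ ∀ v ∈ PrevSub T, u <+: v → u = v

/-- `u` is a branching element of `PrevSub T`: two distinct one-symbol
extensions of `u` belong to `PrevSub T`. -/
def Branching [DecidableEq σ] [DecidableEq π] (T : List (σ ⊕ π)) (u : List (σ ⊕ ℕ)) : Prop :=
  u ∈ PrevSub T ∧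
    ∃ a b : σ ⊕ ℕ, a ≠ b ∧ u ++ [a] ∈ PrevSub T ∧ u ++ [b] ∈ PrevSub T

/-!
Fix any linear order on the alphabet. Send a branching element `u` with children `u ++ [a]` and
`u ++ [b]`, `a < b`, to the lexicographically least leaf extending `u ++ [b]`. A leaf through
`u ++ [a]` is lexicographically smaller, so the image is never the least leaf; and if `u` were a
proper prefix of another branching element `v` with the same image, then `u ++ [b]` is a prefix of
`v`, and a leaf through the smaller child of `v` would undercut the image of `u`. So any nonempty
finite set of strings has more leaves than branching elements. In `PrevSub T` the encoding of a
prefix is a prefix of the encoding, so a leaf is the encoding of a whole nonempty suffix of `T`,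
and there are at most `n` of those.
-/

namespace PrefixTree

variable {α : Type*} {S : Set (List α)}

def leaves (S : Set (List α)) : Set (List α) :=
  {l | l ∈ S ∧ ∀ v ∈ S, l <+: v → l = v}

def branchings (S : Set (List α)) : Set (List α) :=
  {u | u ∈ S ∧ ∃ a b : α, a ≠ b ∧ u ++ [a] ∈ S ∧ u ++ [b] ∈ S}

theorem leaves_subset : leaves S ⊆ S := fun _ hl => hl.1

theorem branchings_subset : branchings S ⊆ S := fun _ hu => hu.1

theorem exists_leaf_of_prefix (hS : S.Finite) {x : List α} (hx : x ∈ S) :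
    ∃ l ∈ leaves S, x <+: l := by
  obtain ⟨l, ⟨hlS, hxl⟩, hmax⟩ := Set.exists_max_image {v | v ∈ S ∧ x <+: v} List.length
    (hS.subset fun _ hv => hv.1) ⟨x, hx, List.prefix_refl x⟩
  refine ⟨l, ⟨hlS, fun v hv hlv => hlv.eq_of_length ?_⟩, hxl⟩
  exact le_antisymm hlv.length_le (hmax v ⟨hv, hxl.trans hlv⟩)

section LinearOrder

variable [LinearOrder α]

theorem lt_of_prefix_of_prefix {p l₁ l₂ : List α} {a b : α} (hab : a < b)
    (h₁ : p ++ [a] <+: l₁) (h₂ : p ++ [b] <+: l₂) : l₁ < l₂ := by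
  obtain ⟨s, rfl⟩ := h₁
  obtain ⟨t, rfl⟩ := h₂
  simp only [List.append_assoc, List.singleton_append]
  exact List.Lex.append_left _ (List.Lex.rel hab) p

def IsLeastLeafAbove (S : Set (List α)) (x l : List α) : Prop :=
  l ∈ leaves S ∧ x <+: l ∧ ∀ l' ∈ leaves S, x <+: l' → l ≤ l'

theorem exists_isLeastLeafAbove (hS : S.Finite) {x : List α} (hx : x ∈ S) :
    ∃ l, IsLeastLeafAbove S x l := by
  obtain ⟨l, hl, hxl⟩ := exists_leaf_of_prefix hS hx
  obtain ⟨m, ⟨hm, hxm⟩, hmin⟩ := Set.exists_min_image {l | l ∈ leaves S ∧ x <+: l} id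
    (hS.subset fun _ hl => hl.1.1) ⟨l, hl, hxl⟩
  exact ⟨m, hm, hxm, fun l' hl' hxl' => hmin l' ⟨hl', hxl'⟩⟩

def IsUpperLeaf (S : Set (List α)) (u l : List α) : Prop :=
  ∃ a b, a < b ∧ u ++ [a] ∈ S ∧ IsLeastLeafAbove S (u ++ [b]) l

theorem exists_isUpperLeaf (hS : S.Finite) {u : List α} (hu : u ∈ branchings S) :
    ∃ l, IsUpperLeaf S u l := by
  obtain ⟨-, a, b, hab, ha, hb⟩ := hu
  rcases hab.lt_or_gt with hab | hab
  · obtain ⟨l, hl⟩ := exists_isLeastLeafAbove hS hb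
    exact ⟨l, a, b, hab, ha, hl⟩
  · obtain ⟨l, hl⟩ := exists_isLeastLeafAbove hS ha
    exact ⟨l, b, a, hab, hb, hl⟩

theorem IsUpperLeaf.mem_leaves {u l : List α} (h : IsUpperLeaf S u l) : l ∈ leaves S := by
  obtain ⟨_, _, _, _, hl, _⟩ := h
  exact hl

theorem IsUpperLeaf.prefix {u l : List α} (h : IsUpperLeaf S u l) : u <+: l := by
  obtain ⟨_, _, _, _, _, hbl, _⟩ := h
  exact (u.prefix_append _).trans hbl

theorem IsUpperLeaf.exists_lt (hS : S.Finite) {u l : List α} (h : IsUpperLeaf S u l) :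
    ∃ l' ∈ leaves S, l' < l := by
  obtain ⟨a, b, hab, ha, -, hbl, -⟩ := h
  obtain ⟨l', hl', hal'⟩ := exists_leaf_of_prefix hS ha
  exact ⟨l', hl', lt_of_prefix_of_prefix hab hal' hbl⟩

theorem IsUpperLeaf.eq_of_prefix (hS : S.Finite) {u v l : List α} (hu : IsUpperLeaf S u l)
    (hv : IsUpperLeaf S v l) (huv : u <+: v) : u = v := by
  obtain ⟨a, b, -, -, -, hbl, hmin⟩ := hu
  obtain ⟨a', b', hab', ha', -, hbl', -⟩ := hv
  by_contra hne
  have hlen : u.length < v.length :=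
    lt_of_le_of_ne huv.length_le fun h => hne (huv.eq_of_length h)
  have hubv : u ++ [b] <+: v := List.prefix_of_prefix_length_le hbl
    ((v.prefix_append _).trans hbl') (by simpa using hlen)
  obtain ⟨l', hl', hal'⟩ := exists_leaf_of_prefix hS ha'
  have hle : l ≤ l' := hmin l' hl' (hubv.trans ((v.prefix_append _).trans hal'))
  exact (lt_of_prefix_of_prefix hab' hal' hbl').not_ge hle

end LinearOrder

theorem ncard_branchings_lt_ncard_leaves (hS : S.Finite) (hne : S.Nonempty) :
    (branchings S).ncard < (leaves S).ncard := by
  let _ : LinearOrder α := IsWellOrder.linearOrder WellOrderingRel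
  have hL : (leaves S).Finite := hS.subset leaves_subset
  obtain ⟨x, hx⟩ := hne
  obtain ⟨l, hl, -⟩ := exists_leaf_of_prefix hS hx
  obtain ⟨l₀, hl₀, hmin⟩ := Set.exists_min_image (leaves S) id hL ⟨l, hl⟩
  choose! g hg using fun u (hu : u ∈ branchings S) => exists_isUpperLeaf hS hu
  have hmaps : ∀ u ∈ branchings S, g u ∈ leaves S \ {l₀} := by
    intro u hu
    obtain ⟨l', hl', hlt⟩ := (hg u hu).exists_lt hS
    exact ⟨(hg u hu).mem_leaves, fun h => (hmin l' hl').not_gt (h ▸ hlt)⟩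
  have hinj : Set.InjOn g (branchings S) := by
    intro u hu v hv huv
    have hvu : IsUpperLeaf S v (g u) := huv ▸ hg v hv
    rcases List.prefix_or_prefix_of_prefix (hg u hu).prefix hvu.prefix with h | h
    · exact (hg u hu).eq_of_prefix hS hvu h
    · exact (hvu.eq_of_prefix hS (hg u hu) h).symm
  calc (branchings S).ncard ≤ (leaves S \ {l₀}).ncard :=
        Set.ncard_le_ncard_of_injOn g hmaps hinj hL.sdiff
    _ < (leaves S).ncard := Set.ncard_sdiff_singleton_lt_of_mem hl₀ hL

end PrefixTree

section PrevEncode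

variable [DecidableEq σ] [DecidableEq π]

theorem prevAt_append (w t : List (σ ⊕ π)) {i : ℕ} (hi : i < w.length) :
    prevAt (w ++ t) i = prevAt w i := by
  have hget : ∀ j ≤ i, (w ++ t)[j]? = w[j]? := fun j hj =>
    List.getElem?_append_left (lt_of_le_of_lt hj hi)
  have hfilter : ∀ x : π,
      (Finset.range i).filter (fun j => (w ++ t)[j]? = some (Sum.inr x)) =
        (Finset.range i).filter (fun j => w[j]? = some (Sum.inr x)) := fun x =>
    Finset.filter_congr fun j hj => by rw [hget j (Finset.mem_range.mp hj).le]
  unfold prevAt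
  rw [hget i le_rfl]
  rcases w[i]? with _ | _ | x
  · rfl
  · rfl
  · simp only [hfilter]

@[simp]
theorem length_prevEncode (w : List (σ ⊕ π)) : (prevEncode w).length = w.length := by
  simp [prevEncode]

@[simp]
theorem prevEncode_eq_nil_iff {w : List (σ ⊕ π)} : prevEncode w = [] ↔ w = [] := by
  rw [← List.length_eq_zero_iff, length_prevEncode, List.length_eq_zero_iff]

theorem prevEncode_prefix_of_prefix {w v : List (σ ⊕ π)} (h : w <+: v) :
    prevEncode w <+: prevEncode v := by
  obtain ⟨t, rfl⟩ := h
  have htake : prevEncode w = (prevEncode (w ++ t)).take w.length := by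
    unfold prevEncode
    rw [← List.map_take, List.take_range, List.length_append,
      min_eq_left (Nat.le_add_right _ _)]
    exact List.map_congr_left fun i hi => (prevAt_append w t (List.mem_range.mp hi)).symm
  rw [htake]
  exact List.take_prefix _ _

end PrevEncode

namespace PrevSub

variable [DecidableEq σ] [DecidableEq π] {T : List (σ ⊕ π)}

theorem prevEncode_mem {w : List (σ ⊕ π)} (h : w <:+: T) : prevEncode w ∈ PrevSub T :=
  ⟨w, h, rfl⟩

theorem finite (T : List (σ ⊕ π)) : (PrevSub T).Finite := by
  refine (T.sublists.map prevEncode).toFinset.finite_toSet.subset ?_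
  rintro _ ⟨w, hw, rfl⟩
  simpa using ⟨w, hw.sublist, rfl⟩

theorem ne_nil_of_mem_leaves (hT : T ≠ []) {l : List (σ ⊕ ℕ)}
    (hl : l ∈ PrefixTree.leaves (PrevSub T)) : l ≠ [] := by
  rintro rfl
  have h := hl.2 _ (prevEncode_mem (List.infix_refl T)) List.nil_prefix
  exact hT (prevEncode_eq_nil_iff.mp h.symm)

theorem leaves_subset_image_drop (hT : T ≠ []) :
    PrefixTree.leaves (PrevSub T) ⊆ (fun k => prevEncode (T.drop k)) '' Set.Iio T.length := by
  intro l hl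
  obtain ⟨w, hw, rfl⟩ := hl.1
  obtain ⟨t, hwt, htT⟩ := List.infix_iff_prefix_suffix.mp hw
  have hl_eq : prevEncode w = prevEncode t :=
    hl.2 _ (prevEncode_mem htT.isInfix) (prevEncode_prefix_of_prefix hwt)
  have ht : t ≠ [] := by
    rintro rfl
    exact ne_nil_of_mem_leaves hT hl hl_eq
  refine ⟨T.length - t.length, ?_, ?_⟩
  · exact Nat.sub_lt (List.length_pos_iff.mpr hT) (List.length_pos_iff.mpr ht)
  · simp only [← List.suffix_iff_eq_drop.mp htT, hl_eq]

theorem ncard_leaves_le (hT : T ≠ []) : (PrefixTree.leaves (PrevSub T)).ncard ≤ T.length :=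
  calc (PrefixTree.leaves (PrevSub T)).ncard
      ≤ ((fun k => prevEncode (T.drop k)) '' Set.Iio T.length).ncard :=
        Set.ncard_le_ncard (leaves_subset_image_drop hT) ((Set.finite_Iio _).image _)
    _ ≤ (Set.Iio T.length).ncard := Set.ncard_image_le (Set.finite_Iio _)
    _ = T.length := by simp

end PrevSub

theorem card_branching_lt_general [DecidableEq σ] [DecidableEq π]
    (T' : List (σ ⊕ π)) (d : σ) (T : List (σ ⊕ π))
    (hT : T = T' ++ [Sum.inl d]) :
    {u : List (σ ⊕ ℕ) | Branching T u}.Finite ∧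
      {u : List (σ ⊕ ℕ) | Branching T u}.ncard < T.length := by
  have hT_ne : T ≠ [] := by simp [hT]
  have hne : (PrevSub T).Nonempty := ⟨_, PrevSub.prevEncode_mem (List.infix_refl T)⟩
  refine ⟨(PrevSub.finite T).subset PrefixTree.branchings_subset, ?_⟩
  calc {u | Branching T u}.ncard = (PrefixTree.branchings (PrevSub T)).ncard := rfl
    _ < (PrefixTree.leaves (PrevSub T)).ncard :=
      PrefixTree.ncard_branchings_lt_ncard_leaves (PrevSub.finite T) hne
    _ ≤ T.length := PrevSub.ncard_leaves_le hT_ne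

/-- For a text of length `n ≥ 1` ending with a sentinel occurring nowhere else,
the number of branching elements of `PrevSub T` is less than `n`. -/
theorem card_branching_lt [DecidableEq σ] [DecidableEq π]
    (T' : List (σ ⊕ π)) (d : σ) (T : List (σ ⊕ π))
    (hT : T = T' ++ [Sum.inl d]) (hd : Sum.inl d ∉ T') :
    {u : List (σ ⊕ ℕ) | Branching T u}.Finite ∧
      {u : List (σ ⊕ ℕ) | Branching T u}.ncard < T.length :=
  card_branching_lt_general T' d T hT
end
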